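/- arXiv:1603.02158 — 8 statements merged into one kernel-verified Lean document; each statement's English description precedes it below -/
import Mathlib

section
/- For arbitrary complex numbers z_1, ..., z_n, the sum of |z_i|^2 is at most one half of the quantity (sum of |z_i|)^2 + |sum of z_i|^2. -/
/-!
Induct on the number of vectors. Adding a vector `x` to a family with sum `S` and norm-sum `T`
raises the left side by `2‖x‖²` and the right side by `2‖x‖² + 2 (T‖x‖ + ⟪x, S⟫)`, and
`-⟪x, S⟫ ≤ ‖x‖ ‖S‖ ≤ ‖x‖ T` by Cauchy–Schwarz and the triangle inequality.
-/

open Finset RealInnerProductSpace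

theorem Finset.two_mul_sum_norm_sq_le {ι E : Type*} [NormedAddCommGroup E]
    [InnerProductSpace ℝ E] (s : Finset ι) (x : ι → E) :
    2 * ∑ i ∈ s, ‖x i‖ ^ 2 ≤ (∑ i ∈ s, ‖x i‖) ^ 2 + ‖∑ i ∈ s, x i‖ ^ 2 := by
  classical
  induction s using Finset.induction_on with
  | empty => simp
  | insert a s ha ih =>
    rw [sum_insert ha, sum_insert ha, sum_insert ha, norm_add_sq_real]
    have h_inner : -(‖x a‖ * ‖∑ i ∈ s, x i‖) ≤ ⟪x a, ∑ i ∈ s, x i⟫ :=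
      neg_le_of_abs_le (abs_real_inner_le_norm _ _)
    have h_triangle : ‖x a‖ * ‖∑ i ∈ s, x i‖ ≤ ‖x a‖ * ∑ i ∈ s, ‖x i‖ :=
      mul_le_mul_of_nonneg_left (norm_sum_le _ _) (norm_nonneg _)
    nlinarith

theorem sum_sq_abs_le_half (n : ℕ) (z : Fin n → ℂ) :
    ∑ i, ‖z i‖ ^ 2 ≤
      (1 / 2) * ((∑ i, ‖z i‖) ^ 2 + ‖∑ i, z i‖ ^ 2) := by
  linarith [univ.two_mul_sum_norm_sq_le z]
end

section
/- Let λ be a probability distribution on {1,...,n} and let D_λ be the diagonal matrix with entries λ_i, and |ψ⟩ = Σ_i √λ_i |i⟩. Then the matrix 1 - 2 D_λ + |ψ⟩⟨ψ| is positive semidefinite. -/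
/-! With `a i = √(lam i)`, so that `∑ i, a i ^ 2 = 1`, the quadratic form of the matrix at `x` equals
`½ ∑_{i ≠ j} (a j * x i + a i * x j) ^ 2`: expanding the full double sum and using `∑ a_j² = 1` gives
`2‖x‖² + 2 (a ⬝ᵥ x)²`, and the diagonal terms contribute `4 ∑ a_i² x_i²`. -/

open Matrix

section

variable {ι : Type*} [Fintype ι] (a x : ι → ℝ)

theorem sum_sum_sq_mul_add_mul (ha : ∑ i, a i ^ 2 = 1) :
    ∑ i, ∑ j, (a j * x i + a i * x j) ^ 2 = 2 * ∑ i, x i ^ 2 + 2 * (a ⬝ᵥ x) ^ 2 := by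
  have expand : ∀ i j, (a j * x i + a i * x j) ^ 2 =
      a j ^ 2 * x i ^ 2 + a i ^ 2 * x j ^ 2 + 2 * ((a i * x i) * (a j * x j)) := fun i j => by ring
  simp only [expand, Finset.sum_add_distrib, ← Finset.mul_sum, ← Finset.sum_mul, ha, dotProduct]
  ring

variable [DecidableEq ι]

theorem dotProduct_one_sub_two_diagonal_add_vecMulVec_mulVec :
    x ⬝ᵥ ((1 - 2 • diagonal (a ^ 2) + vecMulVec a a) *ᵥ x) =
      ∑ i, x i ^ 2 - 2 * ∑ i, a i ^ 2 * x i ^ 2 + (a ⬝ᵥ x) ^ 2 := by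
  simp only [add_mulVec, sub_mulVec, one_mulVec, smul_mulVec, vecMulVec_mulVec,
    dotProduct_add, dotProduct_sub, dotProduct_smul]
  simp only [mulVec_diagonal, dotProduct, Pi.pow_apply, op_smul_eq_mul, nsmul_eq_mul]
  simp only [Nat.cast_ofNat, ← pow_two, mul_comm (x _)]
  simp only [mul_assoc, ← pow_two]

theorem dotProduct_one_sub_two_diagonal_add_vecMulVec_mulVec_eq_half_sum_offDiag
    (ha : ∑ i, a i ^ 2 = 1) :
    x ⬝ᵥ ((1 - 2 • diagonal (a ^ 2) + vecMulVec a a) *ᵥ x) =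
      (∑ i, ∑ j ∈ Finset.univ.erase i, (a j * x i + a i * x j) ^ 2) / 2 := by
  have hdiag := sum_sum_sq_mul_add_mul a x ha
  simp only [← fun i => Finset.add_sum_erase _ (fun j => (a j * x i + a i * x j) ^ 2)
    (Finset.mem_univ i), Finset.sum_add_distrib] at hdiag
  rw [dotProduct_one_sub_two_diagonal_add_vecMulVec_mulVec]
  have : ∀ i, (a i * x i + a i * x i) ^ 2 = 4 * (a i ^ 2 * x i ^ 2) := fun i => by ring
  simp only [this, ← Finset.mul_sum] at hdiag
  linarith

theorem posSemidef_one_sub_two_diagonal_add_vecMulVec (ha : ∑ i, a i ^ 2 = 1) :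
    (1 - 2 • diagonal (a ^ 2) + vecMulVec a a).PosSemidef := by
  refine posSemidef_iff_dotProduct_mulVec.2 ⟨?_, fun x => ?_⟩
  · exact ((isHermitian_one.sub ((isHermitian_diagonal _).smul (.all 2))).add
      (by simpa using posSemidef_vecMulVec_self_star a |>.isHermitian))
  · rw [star_trivial, dotProduct_one_sub_two_diagonal_add_vecMulVec_mulVec_eq_half_sum_offDiag a x ha]
    positivity

end

theorem one_sub_two_diag_add_psi_posSemidef (n : ℕ) (lam : Fin n → ℝ)
    (hpos : ∀ i, 0 ≤ lam i) (hsum : ∑ i, lam i = 1) :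
    ((1 : Matrix (Fin n) (Fin n) ℝ) - 2 • Matrix.diagonal lam +
      Matrix.of (fun i j => Real.sqrt (lam i * lam j))).PosSemidef := by
  set a : Fin n → ℝ := fun i => Real.sqrt (lam i)
  have hlam : lam = a ^ 2 := funext fun i => (Real.sq_sqrt (hpos i)).symm
  have hpsi : Matrix.of (fun i j => Real.sqrt (lam i * lam j)) = vecMulVec a a :=
    Matrix.ext fun i j => Real.sqrt_mul (hpos i) _
  rw [hpsi, hlam]
  exact posSemidef_one_sub_two_diagonal_add_vecMulVec a (by simpa [hlam] using hsum)
end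

section
/- Let λ be a probability distribution on {1,...,n}, D_λ the diagonal matrix with entries λ_i, |ψ⟩ = Σ_i √λ_i |i⟩, and let a, c be real numbers with -2 ≤ a < 0 and a + c + 1 ≥ 0. Then 1 + a D_λ + c |ψ⟩⟨ψ| is positive semidefinite. -/
/-!
With `u = √λ` the matrix is `1 + a D + c u uᵀ`, where `D = diagonal (u ^ 2)` and `∑ uᵢ² = 1`.
It is monotone in `c`, so it suffices to take `c = -1 - a`; the matrix is then affine in `a`,
hence a convex combination of its values at `a = 0, -1, -2`: `1 - u uᵀ` (Cauchy–Schwarz),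
`1 - D` (as `uᵢ² ≤ 1`) and `1 - 2 D + u uᵀ`. The last one is positive semidefinite because
`∑ᵢ ∑ⱼ (uⱼ xᵢ + uᵢ xⱼ)² = 2 (‖u‖² ‖x‖² + ⟨u, x⟩²)` dominates its diagonal part `4 ∑ᵢ uᵢ² xᵢ²`.
-/

open Matrix

namespace Finset

theorem two_mul_sum_mul_sq_le {ι R : Type*} [CommRing R] [LinearOrder R] [IsStrictOrderedRing R]
    (s : Finset ι) (u x : ι → R) :
    2 * ∑ i ∈ s, (u i * x i) ^ 2 ≤
      (∑ i ∈ s, u i ^ 2) * ∑ i ∈ s, x i ^ 2 + (∑ i ∈ s, u i * x i) ^ 2 := by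
  have hdouble : ∑ i ∈ s, ∑ j ∈ s, (u j * x i + u i * x j) ^ 2 =
      2 * ((∑ i ∈ s, u i ^ 2) * ∑ i ∈ s, x i ^ 2 + (∑ i ∈ s, u i * x i) ^ 2) := by
    have hexpand (i j : ι) : (u j * x i + u i * x j) ^ 2 =
        u j ^ 2 * x i ^ 2 + u i ^ 2 * x j ^ 2 + 2 * (u i * x i) * (u j * x j) := by
      ring
    simp only [hexpand, sum_add_distrib, ← mul_sum, ← sum_mul]
    ring
  have hdiag : ∑ i ∈ s, (2 * (u i * x i)) ^ 2 ≤ ∑ i ∈ s, ∑ j ∈ s, (u j * x i + u i * x j) ^ 2 :=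
    sum_le_sum fun i hi => by
      simpa only [two_mul] using single_le_sum (fun j _ => sq_nonneg (u j * x i + u i * x j)) hi
  have hdiag_eq : ∑ i ∈ s, (2 * (u i * x i)) ^ 2 = 4 * ∑ i ∈ s, (u i * x i) ^ 2 := by
    rw [mul_sum]; exact sum_congr rfl fun i _ => by ring
  linarith

end Finset

namespace Matrix

variable {ι : Type*}

theorem posSemidef_one_sub_diagonal [DecidableEq ι] {d : ι → ℝ} (hd : ∀ i, d i ≤ 1) :
    (1 - diagonal d).PosSemidef := by
  rw [← diagonal_one, diagonal_sub]
  exact .diagonal fun i => sub_nonneg.2 (hd i)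

variable [Fintype ι]

theorem dotProduct_vecMulVec_self_mulVec (u x : ι → ℝ) :
    x ⬝ᵥ (vecMulVec u u *ᵥ x) = (u ⬝ᵥ x) ^ 2 := by
  rw [vecMulVec_mulVec, op_smul_eq_smul, dotProduct_smul, smul_eq_mul, dotProduct_comm, sq]

theorem sq_dotProduct_le_dotProduct_self {u : ι → ℝ} (hu : ∑ i, u i ^ 2 ≤ 1) (x : ι → ℝ) :
    (u ⬝ᵥ x) ^ 2 ≤ x ⬝ᵥ x := by
  calc (u ⬝ᵥ x) ^ 2 ≤ (∑ i, u i ^ 2) * ∑ i, x i ^ 2 := Finset.sum_mul_sq_le_sq_mul_sq _ u x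
    _ ≤ 1 * ∑ i, x i ^ 2 := by gcongr
    _ = x ⬝ᵥ x := by simp [dotProduct, sq]

variable [DecidableEq ι]

theorem posSemidef_one_sub_vecMulVec {u : ι → ℝ} (hu : ∑ i, u i ^ 2 ≤ 1) :
    (1 - vecMulVec u u).PosSemidef := by
  refine .of_dotProduct_mulVec_nonneg
    (isHermitian_one.sub (posSemidef_vecMulVec_self_star u).isHermitian) fun x => ?_
  rw [star_trivial, sub_mulVec, one_mulVec, dotProduct_sub, dotProduct_vecMulVec_self_mulVec,
    sub_nonneg]
  exact sq_dotProduct_le_dotProduct_self hu x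

theorem posSemidef_one_sub_two_smul_diagonal_add_vecMulVec {u : ι → ℝ} (hu : ∑ i, u i ^ 2 ≤ 1) :
    (1 - 2 • diagonal (u ^ 2) + vecMulVec u u).PosSemidef := by
  refine .of_dotProduct_mulVec_nonneg
    ((isHermitian_one.sub ((isHermitian_diagonal _).smul (.all _))).add
      (posSemidef_vecMulVec_self_star u).isHermitian) fun x => ?_
  rw [star_trivial, add_mulVec, sub_mulVec, one_mulVec, dotProduct_add, dotProduct_sub,
    dotProduct_vecMulVec_self_mulVec]
  have hdiag : x ⬝ᵥ ((2 • diagonal (u ^ 2)) *ᵥ x) = 2 * ∑ i, (u i * x i) ^ 2 := by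
    rw [smul_mulVec, dotProduct_smul, nsmul_eq_mul, Nat.cast_ofNat]
    simp only [dotProduct, mulVec_diagonal, Pi.pow_apply]
    exact congrArg _ (Finset.sum_congr rfl fun i _ => by ring)
  have hkey := Finset.two_mul_sum_mul_sq_le Finset.univ u x
  have hx : 0 ≤ ∑ i, x i ^ 2 := by positivity
  have hxx : x ⬝ᵥ x = ∑ i, x i ^ 2 := by simp only [dotProduct, sq]
  rw [hdiag, hxx, dotProduct]
  linarith [mul_le_mul_of_nonneg_right hu hx]

theorem posSemidef_one_add_smul_diagonal_add_smul_vecMulVec {u : ι → ℝ} (hu : ∑ i, u i ^ 2 ≤ 1)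
    {a c : ℝ} (ha₁ : -2 ≤ a) (ha₂ : a ≤ 0) (hac : 0 ≤ a + c + 1) :
    (1 + a • diagonal (u ^ 2) + c • vecMulVec u u).PosSemidef := by
  have hD : (1 - diagonal (u ^ 2)).PosSemidef := posSemidef_one_sub_diagonal fun i =>
    (Finset.single_le_sum (fun j _ => sq_nonneg (u j)) (Finset.mem_univ i)).trans hu
  have hP : (vecMulVec u u).PosSemidef := by simpa using posSemidef_vecMulVec_self_star u
  rcases le_total a (-1) with h | h
  · have := ((hD.smul (by linarith : 0 ≤ a + 2)).add
      ((posSemidef_one_sub_two_smul_diagonal_add_vecMulVec hu).smul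
        (by linarith : 0 ≤ -1 - a))).add (hP.smul hac)
    convert this using 1
    module
  · have := (((posSemidef_one_sub_vecMulVec hu).smul (by linarith : 0 ≤ 1 + a)).add
      (hD.smul (by linarith : 0 ≤ -a))).add (hP.smul hac)
    convert this using 1
    module

end Matrix

theorem chi_posSemidef_of_neg_a (n : ℕ) (lam : Fin n → ℝ)
    (hpos : ∀ i, 0 ≤ lam i) (hsum : ∑ i, lam i = 1)
    (a c : ℝ) (ha₁ : -2 ≤ a) (ha₂ : a < 0) (hac : a + c + 1 ≥ 0) :
    ((1 : Matrix (Fin n) (Fin n) ℝ) + a • Matrix.diagonal lam +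
      c • Matrix.of (fun i j => Real.sqrt (lam i * lam j))).PosSemidef := by
  set u : Fin n → ℝ := fun i => Real.sqrt (lam i)
  have hlam : lam = u ^ 2 := funext fun i => (Real.sq_sqrt (hpos i)).symm
  have hpsi : Matrix.of (fun i j => Real.sqrt (lam i * lam j)) = vecMulVec u u :=
    Matrix.ext fun i j => Real.sqrt_mul (hpos i) _
  rw [hpsi, hlam]
  exact posSemidef_one_add_smul_diagonal_add_smul_vecMulVec (by simpa [u, hpos] using hsum.le)
    ha₁ ha₂.le hac
end

section
/- Let a ≥ 0 and c be real numbers. The matrix 1 + a D_λ + c |ψ⟩⟨ψ| is positive semidefinite for every probability distribution λ on {1,...,n} (with D_λ diagonal with entries λ_i and |ψ⟩ = Σ_i √λ_i |i⟩) if and only if c + a/n + 1 ≥ 0. -/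
/-!
With `wᵢ = 1 + a λᵢ` and `uᵢ = √λᵢ` the matrix is `diagonal w + c • u uᵀ`, whose quadratic form
is `∑ wᵢ xᵢ² + c (u ⬝ᵥ x)²`. By the weighted Cauchy–Schwarz inequality
`(u ⬝ᵥ x)² ≤ (∑ uᵢ² / wᵢ) (∑ wᵢ xᵢ²)`, with equality at `x = u / w`, such a matrix is positive
semidefinite exactly when `1 + c ∑ uᵢ² / wᵢ ≥ 0`. Here `∑ uᵢ² / wᵢ = ∑ λᵢ / (1 + a λᵢ)`, a sum of
concave functions of `λ`, which over the simplex is largest at the uniform distribution, where it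
equals `n / (n + a)`; so the condition for all `λ` is `1 + c n / (n + a) ≥ 0`.
-/

open Matrix Finset

variable {ι : Type*}

section Simplex

variable [Fintype ι]

lemma sum_div_one_add_mul_le {lam : ι → ℝ} (hl : ∀ i, 0 ≤ lam i) (hs : ∑ i, lam i = 1)
    {a : ℝ} (ha : 0 ≤ a) :
    ∑ i, lam i / (1 + a * lam i) ≤ Fintype.card ι / (Fintype.card ι + a) := by
  set N : ℝ := (Fintype.card ι : ℝ)
  obtain ⟨i₀, -, -⟩ := exists_ne_zero_of_sum_ne_zero (hs ▸ one_ne_zero)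
  have hN : 0 < N := by simpa [N] using Fintype.card_pos_iff.mpr ⟨i₀⟩
  calc ∑ i, lam i / (1 + a * lam i)
      ≤ ∑ i, (a + N ^ 2 * lam i) / (N + a) ^ 2 := by
        refine sum_le_sum fun i _ => ?_
        have := hl i
        rw [div_le_div_iff₀ (by positivity) (by positivity)]
        -- tangent line of the concave map `t ↦ t / (1 + a t)` at `t = 1 / N`
        nlinarith [mul_nonneg ha (sq_nonneg (N * lam i - 1))]
    _ = N / (N + a) := by
        rw [← sum_div, sum_add_distrib, ← mul_sum, hs, sum_const, card_univ, nsmul_eq_mul]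
        field_simp
        ring

lemma sum_inv_card_div_one_add_mul_inv_card [Nonempty ι] (a : ℝ) :
    ∑ _i : ι, (Fintype.card ι : ℝ)⁻¹ / (1 + a * (Fintype.card ι : ℝ)⁻¹) =
      Fintype.card ι / (Fintype.card ι + a) := by
  have hN : (Fintype.card ι : ℝ) ≠ 0 := by positivity
  rw [sum_const, card_univ, nsmul_eq_mul]
  field_simp

end Simplex

variable [DecidableEq ι]

lemma one_add_smul_diagonal_add_smul_of_sqrt_mul {lam : ι → ℝ} (hl : ∀ i, 0 ≤ lam i)
    (a c : ℝ) :
    (1 : Matrix ι ι ℝ) + a • diagonal lam + c • of (fun i j => √(lam i * lam j)) =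
      diagonal (fun i => 1 + a * lam i) +
        c • vecMulVec (fun i => √(lam i)) (fun i => √(lam i)) := by
  have hvec : of (fun i j => √(lam i * lam j)) =
      vecMulVec (fun i => √(lam i)) (fun i => √(lam i)) := by
    ext i j
    simp [vecMulVec_apply, Real.sqrt_mul (hl i)]
  rw [hvec, ← diagonal_one, ← diagonal_smul, diagonal_add]
  rfl

variable [Fintype ι]

lemma dotProduct_diagonal_add_smul_vecMulVec_mulVec (w u x : ι → ℝ) (c : ℝ) :
    x ⬝ᵥ ((diagonal w + c • vecMulVec u u) *ᵥ x) = ∑ i, w i * x i ^ 2 + c * (u ⬝ᵥ x) ^ 2 := by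
  rw [add_mulVec, smul_mulVec, vecMulVec_mulVec, op_smul_eq_smul, dotProduct_add,
    dotProduct_smul, dotProduct_smul, dotProduct_comm x u, smul_eq_mul, smul_eq_mul, ← sq]
  congr 1
  simp only [dotProduct, mulVec_diagonal]
  exact sum_congr rfl fun i _ => by ring

lemma isHermitian_diagonal_add_smul_vecMulVec (w u : ι → ℝ) (c : ℝ) :
    (diagonal w + c • vecMulVec u u).IsHermitian :=
  (isHermitian_diagonal w).add ((posSemidef_vecMulVec_self_star u).isHermitian.smul (.all c))

theorem posSemidef_diagonal_add_smul_vecMulVec_iff {w : ι → ℝ} (hw : ∀ i, 0 < w i)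
    (u : ι → ℝ) (c : ℝ) :
    (diagonal w + c • vecMulVec u u).PosSemidef ↔ 0 ≤ 1 + c * ∑ i, u i ^ 2 / w i := by
  set s := ∑ i, u i ^ 2 / w i
  have hs : 0 ≤ s := sum_nonneg fun i _ => div_nonneg (sq_nonneg _) (hw i).le
  simp only [posSemidef_iff_dotProduct_mulVec, isHermitian_diagonal_add_smul_vecMulVec,
    true_and, star_trivial, dotProduct_diagonal_add_smul_vecMulVec_mulVec]
  constructor
  · intro h
    have hx : ∑ i, w i * (u i / w i) ^ 2 + c * (u ⬝ᵥ fun i => u i / w i) ^ 2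
        = s * (1 + c * s) := by
      have h1 : ∑ i, w i * (u i / w i) ^ 2 = s :=
        sum_congr rfl fun i _ => by field_simp [(hw i).ne']
      have h2 : (u ⬝ᵥ fun i => u i / w i) = s :=
        sum_congr rfl fun i _ => by field_simp [(hw i).ne']
      rw [h1, h2]
      ring
    rcases hs.eq_or_lt with h0 | hpos
    · simp [← h0]
    · exact nonneg_of_mul_nonneg_right (hx ▸ h _) hpos
  · intro h x
    set S := ∑ i, w i * x i ^ 2
    have hS : 0 ≤ S := sum_nonneg fun i _ => mul_nonneg (hw i).le (sq_nonneg _)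
    have hcs : (u ⬝ᵥ x) ^ 2 ≤ s * S :=
      sum_sq_le_sum_mul_sum_of_sq_le_mul _ (fun i _ => div_nonneg (sq_nonneg _) (hw i).le)
        (fun i _ => mul_nonneg (hw i).le (sq_nonneg _))
        fun i _ => le_of_eq <| by field_simp [(hw i).ne']
    rcases le_total 0 c with hc | hc
    · positivity
    · nlinarith [mul_le_mul_of_nonpos_left hcs hc, mul_nonneg hS h]

theorem posSemidef_one_add_smul_diagonal_add_smul_of_sqrt_mul_iff {lam : ι → ℝ}
    (hl : ∀ i, 0 ≤ lam i) {a : ℝ} (ha : 0 ≤ a) (c : ℝ) :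
    ((1 : Matrix ι ι ℝ) + a • diagonal lam + c • of (fun i j => √(lam i * lam j))).PosSemidef ↔
      0 ≤ 1 + c * ∑ i, lam i / (1 + a * lam i) := by
  rw [one_add_smul_diagonal_add_smul_of_sqrt_mul hl,
    posSemidef_diagonal_add_smul_vecMulVec_iff fun i => by positivity [hl i]]
  simp only [Real.sq_sqrt (hl _)]

theorem chi_posSemidef_iff_of_nonneg_a (n : ℕ) (hn : 0 < n) (a c : ℝ) (ha : 0 ≤ a) :
    (∀ lam : Fin n → ℝ, (∀ i, 0 ≤ lam i) → ∑ i, lam i = 1 →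
        ((1 : Matrix (Fin n) (Fin n) ℝ) + a • Matrix.diagonal lam +
          c • Matrix.of (fun i j => Real.sqrt (lam i * lam j))).PosSemidef)
      ↔ c + a / n + 1 ≥ 0 := by
  have hn' : (0 : ℝ) < n := by exact_mod_cast hn
  have : Nonempty (Fin n) := Fin.pos_iff_nonempty.mp hn
  have hcond : 1 + c * (n / (n + a)) = n / (n + a) * (c + a / n + 1) := by
    field_simp
    ring
  rw [ge_iff_le, ← mul_nonneg_iff_of_pos_left (c := n / (n + a)) (by positivity), ← hcond]
  constructor
  · intro h
    have h_unif := h (fun _ => (n : ℝ)⁻¹) (fun _ => by positivity) (by simp [hn'.ne'])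
    have h_sum := sum_inv_card_div_one_add_mul_inv_card (ι := Fin n) a
    rw [Fintype.card_fin] at h_sum
    rwa [posSemidef_one_add_smul_diagonal_add_smul_of_sqrt_mul_iff (fun _ => by positivity) ha,
      h_sum] at h_unif
  · intro h lam hl hs
    rw [posSemidef_one_add_smul_diagonal_add_smul_of_sqrt_mul_iff hl ha]
    have hle := sum_div_one_add_mul_le hl hs ha
    rw [Fintype.card_fin] at hle
    have hsum : 0 ≤ ∑ i, lam i / (1 + a * lam i) :=
      sum_nonneg fun i _ => by positivity [hl i]
    rcases le_total 0 c with hc | hc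
    · positivity
    · nlinarith [mul_le_mul_of_nonpos_left hle hc]
end

section
/- Define Φ[α,β,γ](X) = 1_{AB} Tr(X) + α (1_A ⊗ Tr_A(X)) + β (Tr_B(X) ⊗ 1_B) + γ X on matrices over ℂ^{d_A} ⊗ ℂ^{d_B}. If Φ[α,β,γ] is positive (maps positive semidefinite matrices to positive semidefinite matrices), then α ≥ -1, β ≥ -1, 1 + α + β + γ ≥ 0, and 1 + (α+β)/n + γ ≥ 0, where n = min(d_A, d_B). -/
/-!
Positivity of `Φ` is tested on pure states `v vᴴ` through the quadratic form `vᴴ Φ(v vᴴ) v`.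
For a product state `v = e_a ⊗ e_b` the diagonal entries of `Φ(v vᴴ)` are
`1 + α [b' = b] + β [a' = a] + γ [(a', b') = (a, b)]`; two distinct indices in each factor give
the first three inequalities. Writing a general state as `v = vec M`, one finds
`vᴴ Φ(v vᴴ) v = (1 + γ) tr(MᴴM)² + (α + β) tr((MᴴM)²)`. For the maximally entangled state `M` is a
partial isometry, `MᴴM` is a projection of rank `n = min d_A d_B`, and the form equals
`n² (1 + (α + β) / n + γ)`.
-/

open Matrix Kronecker ComplexOrder

namespace Matrix

variable {m n R : Type*}

section PartialTrace

variable [AddCommMonoid R]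

/-- `traceLeft` traces out the first tensor factor (the paper's `Tr_A`), `traceRight` the second
(`Tr_B`). -/
def traceLeft [Fintype m] (X : Matrix (m × n) (m × n) R) : Matrix n n R :=
  of fun j j' => ∑ i, X (i, j) (i, j')

def traceRight [Fintype n] (X : Matrix (m × n) (m × n) R) : Matrix m m R :=
  of fun i i' => ∑ j, X (i, j) (i', j)

variable [DecidableEq m] [DecidableEq n]

@[simp]
lemma traceLeft_single_self [Fintype m] (p : m × n) (r : R) :
    traceLeft (single p p r) = single p.2 p.2 r := by
  ext j j'
  rw [traceLeft, of_apply,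
    Fintype.sum_eq_single p.1 fun i hi => by simp [Prod.ext_iff, Ne.symm hi]]
  simp [single_apply, Prod.ext_iff]

@[simp]
lemma traceRight_single_self [Fintype n] (p : m × n) (r : R) :
    traceRight (single p p r) = single p.1 p.1 r := by
  ext i i'
  rw [traceRight, of_apply,
    Fintype.sum_eq_single p.2 fun j hj => by simp [Prod.ext_iff, Ne.symm hj]]
  simp [single_apply, Prod.ext_iff]

end PartialTrace

section StarRing

variable [CommSemiring R] [StarRing R]

lemma traceLeft_vecMulVec_vec [Fintype m] (M : Matrix n m R) :
    traceLeft (vecMulVec (vec M) (star (vec M))) = M * Mᴴ := by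
  ext j j'
  simp [traceLeft, vecMulVec_apply, mul_apply]

lemma traceRight_vecMulVec_vec [Fintype n] (M : Matrix n m R) :
    traceRight (vecMulVec (vec M) (star (vec M))) = (Mᴴ * M)ᵀ := by
  ext i i'
  simp [traceRight, vecMulVec_apply, mul_apply, mul_comm]

end StarRing

end Matrix

section PhiMap

variable {m n R : Type*} [Fintype m] [Fintype n] [DecidableEq m] [DecidableEq n]

def IsPositiveMap {ι : Type*} [Fintype ι] (Φ : Matrix ι ι ℂ → Matrix ι ι ℂ) : Prop :=
  ∀ X, X.PosSemidef → (Φ X).PosSemidef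

def phiMap [Semiring R] (α β γ : R) (X : Matrix (m × n) (m × n) R) : Matrix (m × n) (m × n) R :=
  X.trace • 1 + α • (1 ⊗ₖ traceLeft X) + β • (traceRight X ⊗ₖ 1) + γ • X

lemma phiMap_single_apply_self [Semiring R] (α β γ : R) (p q : m × n) :
    phiMap α β γ (single p p 1) q q =
      1 + (if p.2 = q.2 then α else 0) + (if p.1 = q.1 then β else 0) +
        (if p = q then γ else 0) := by
  simp [phiMap, single_apply]

lemma star_vec_dotProduct_phiMap_mulVec_vec [CommSemiring R] [StarRing R] (α β γ : R)
    (M : Matrix n m R) :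
    star (vec M) ⬝ᵥ phiMap α β γ (vecMulVec (vec M) (star (vec M))) *ᵥ vec M =
      (1 + γ) * trace (Mᴴ * M) ^ 2 + (α + β) * trace (Mᴴ * M * (Mᴴ * M)) := by
  have hnorm : star (vec M) ⬝ᵥ vec M = trace (Mᴴ * M) := star_vec_dotProduct_vec M M
  simp only [phiMap, add_mulVec, smul_mulVec, one_mulVec, traceLeft_vecMulVec_vec,
    traceRight_vecMulVec_vec, kronecker_mulVec_vec, vecMulVec_mulVec, trace_vecMulVec,
    dotProduct_add, dotProduct_smul, transpose_transpose, transpose_one, Matrix.mul_one,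
    Matrix.one_mul, op_smul_eq_smul, smul_eq_mul, dotProduct_comm (vec M), hnorm,
    star_vec_dotProduct_vec, Matrix.mul_assoc]
  ring

end PhiMap

namespace Matrix

variable {k m R : Type*} [Fintype m]

lemma conjTranspose_submatrix_one_mul [DecidableEq k] [DecidableEq m] [Semiring R] [StarRing R]
    {e : k → m} (he : Function.Injective e) :
    ((1 : Matrix m m R).submatrix id e)ᴴ * (1 : Matrix m m R).submatrix id e = 1 := by
  rw [conjTranspose_submatrix, conjTranspose_one, ← submatrix_mul _ _ _ _ _ Function.bijective_id,
    Matrix.one_mul, submatrix_one _ he]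

lemma isIdempotentElem_mul_conjTranspose [Fintype k] [DecidableEq k] [Semiring R] [StarRing R]
    {V : Matrix m k R} (hV : Vᴴ * V = 1) : IsIdempotentElem (V * Vᴴ) := by
  rw [IsIdempotentElem, Matrix.mul_assoc, ← Matrix.mul_assoc Vᴴ, hV, Matrix.one_mul]

lemma trace_mul_conjTranspose [Fintype k] [DecidableEq k] [CommSemiring R] [StarRing R]
    {V : Matrix m k R} (hV : Vᴴ * V = 1) : trace (V * Vᴴ) = Fintype.card k := by
  rw [trace_mul_comm, hV, trace_one]

end Matrix

section Positivity

variable {k m n : Type*} [Fintype m] [Fintype n] [DecidableEq m] [DecidableEq n] {α β γ : ℝ}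

lemma one_add_ite_nonneg_of_isPositiveMap_phiMap
    (hΦ : IsPositiveMap (phiMap (m := m) (n := n) (α : ℂ) β γ)) (p q : m × n) :
    0 ≤ 1 + (if p.2 = q.2 then α else 0) + (if p.1 = q.1 then β else 0) +
      (if p = q then γ else 0) := by
  have hsingle : (single p p (1 : ℂ)).PosSemidef := by
    rw [← diagonal_single]
    exact .diagonal (Pi.single_nonneg.2 zero_le_one)
  have h := (hΦ _ hsingle).diag_nonneg (i := q)
  rw [phiMap_single_apply_self] at h
  split_ifs at h ⊢ <;> exact_mod_cast h

lemma one_add_div_add_nonneg_of_isPositiveMap_phiMap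
    (hΦ : IsPositiveMap (phiMap (m := m) (n := n) (α : ℂ) β γ))
    {M : Matrix n m ℂ} (hM : IsIdempotentElem (Mᴴ * M)) {r : ℝ} (hr : trace (Mᴴ * M) = r)
    (hr0 : 0 < r) : 0 ≤ 1 + (α + β) / r + γ := by
  have h := (hΦ _ (posSemidef_vecMulVec_self_star (vec M))).dotProduct_mulVec_nonneg (vec M)
  rw [star_vec_dotProduct_phiMap_mulVec_vec, hM.eq, hr] at h
  have h' : 0 ≤ (1 + γ) * r ^ 2 + (α + β) * r := by exact_mod_cast h
  have : 1 + (α + β) / r + γ = ((1 + γ) * r ^ 2 + (α + β) * r) / r ^ 2 := by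
    field_simp; ring
  rw [this]
  positivity

lemma one_add_div_card_add_nonneg_of_isPositiveMap_phiMap [Fintype k] [DecidableEq k] [Nonempty k]
    (hΦ : IsPositiveMap (phiMap (m := m) (n := n) (α : ℂ) β γ))
    {e : k → m} {f : k → n} (he : Function.Injective e) (hf : Function.Injective f) :
    0 ≤ 1 + (α + β) / Fintype.card k + γ := by
  -- `vec (W * Vᴴ)` is the maximally entangled vector `∑ i, |e i⟩ ⊗ |f i⟩`.
  set V := (1 : Matrix m m ℂ).submatrix id e
  set W := (1 : Matrix n n ℂ).submatrix id f
  have hV : Vᴴ * V = 1 := conjTranspose_submatrix_one_mul he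
  have hW : Wᴴ * W = 1 := conjTranspose_submatrix_one_mul hf
  have hM : (W * Vᴴ)ᴴ * (W * Vᴴ) = V * Vᴴ := by
    rw [conjTranspose_mul, conjTranspose_conjTranspose, Matrix.mul_assoc, ← Matrix.mul_assoc Wᴴ,
      hW, Matrix.one_mul]
  refine one_add_div_add_nonneg_of_isPositiveMap_phiMap hΦ (M := W * Vᴴ) ?_ ?_
    (Nat.cast_pos.2 Fintype.card_pos)
  · rw [hM]; exact isIdempotentElem_mul_conjTranspose hV
  · rw [hM, trace_mul_conjTranspose hV]; norm_cast

end Positivity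

theorem Phi_positive_necessary (dA dB : ℕ) (hA : 2 ≤ dA) (hB : 2 ≤ dB) (α β γ : ℝ) :
    let Phi : Matrix (Fin dA × Fin dB) (Fin dA × Fin dB) ℂ →
        Matrix (Fin dA × Fin dB) (Fin dA × Fin dB) ℂ :=
      fun X =>
        X.trace • (1 : Matrix (Fin dA × Fin dB) (Fin dA × Fin dB) ℂ)
        + (α : ℂ) • ((1 : Matrix (Fin dA) (Fin dA) ℂ) ⊗ₖ
            Matrix.of (fun j j' : Fin dB => ∑ i : Fin dA, X (i, j) (i, j')))
        + (β : ℂ) • ((Matrix.of (fun i i' : Fin dA => ∑ j : Fin dB, X (i, j) (i', j)))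
            ⊗ₖ (1 : Matrix (Fin dB) (Fin dB) ℂ))
        + (γ : ℂ) • X
    (∀ X, X.PosSemidef → (Phi X).PosSemidef) →
      -1 ≤ α ∧ -1 ≤ β ∧ 0 ≤ 1 + α + β + γ ∧
        0 ≤ 1 + (α + β) / (min dA dB : ℝ) + γ := by
  intro Phi hPhi
  have hΦ : IsPositiveMap (phiMap (α : ℂ) β γ) := hPhi
  let a₀ : Fin dA := ⟨0, by omega⟩
  let a₁ : Fin dA := ⟨1, by omega⟩
  let b₀ : Fin dB := ⟨0, by omega⟩
  let b₁ : Fin dB := ⟨1, by omega⟩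
  have ha : a₀ ≠ a₁ := by simp [a₀, a₁, Fin.ext_iff]
  have hb : b₀ ≠ b₁ := by simp [b₀, b₁, Fin.ext_iff]
  have hα := one_add_ite_nonneg_of_isPositiveMap_phiMap hΦ (a₀, b₀) (a₁, b₀)
  have hβ := one_add_ite_nonneg_of_isPositiveMap_phiMap hΦ (a₀, b₀) (a₀, b₁)
  have hsum := one_add_ite_nonneg_of_isPositiveMap_phiMap hΦ (a₀, b₀) (a₀, b₀)
  simp only [ha, hb, if_true, if_false, Prod.mk.injEq, and_false, false_and] at hα hβ hsum
  have : NeZero (min dA dB) := ⟨by omega⟩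
  have hent := one_add_div_card_add_nonneg_of_isPositiveMap_phiMap hΦ
    (Fin.castLE_injective (min_le_left dA dB)) (Fin.castLE_injective (min_le_right dA dB))
  refine ⟨by linarith, by linarith, by linarith, ?_⟩
  simpa using hent
end

section
/- The map X ↦ 1 Tr(X) - 2 (1 ∘ X) + X on n×n matrices (where 1 ∘ X is the diagonal part of X) equals the Hadamard square of the map X ↦ 1 Tr(X) - X, in the sense that its Choi matrix is the entrywise square of the Choi matrix of X ↦ 1 Tr(X) - X. -/
/-!
The `((a, b), (c, d))` entry of the Choi matrix of `φ` is `φ(E_bd)_ac`, so the Hadamard square of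
the Choi matrix of `φ₂` is the Choi matrix of `E ↦ φ₂(E) ⊙ φ₂(E)` on the matrix units `E`.
For a matrix unit `E`, both `tr E • 1` and `E` are 0/1 matrices, hence Hadamard idempotents, and
their Hadamard product is the diagonal part `1 ⊙ E` of `E`. Expanding the square gives
`(tr E • 1 - E) ⊙ (tr E • 1 - E) = tr E • 1 - 2 (1 ⊙ E) + E = φ₁(E)`.
-/

open Matrix Kronecker

namespace Matrix

variable {ι R : Type*} [Fintype ι] [DecidableEq ι]

theorem sub_hadamard_sub_eq_of_hadamard_self {m n : Type*} [CommRing R] {A B : Matrix m n R}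
    (hA : A ⊙ A = A) (hB : B ⊙ B = B) : (A - B) ⊙ (A - B) = A - 2 • (A ⊙ B) + B := by
  ext i j
  have hAij := congr_fun₂ hA i j
  have hBij := congr_fun₂ hB i j
  simp only [hadamard_apply, sub_apply, add_apply, two_nsmul] at *
  linear_combination hAij + hBij

section single

variable [CommRing R] (i j : ι)

theorem trace_single_smul_one_hadamard_self :
    (trace (single i j (1 : R)) • (1 : Matrix ι ι R)) ⊙ (trace (single i j (1 : R)) • 1) =
      trace (single i j (1 : R)) • 1 := by
  by_cases h : i = j
  · subst h
    simp [trace_single_eq_same, hadamard_one]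
  · simp [trace_single_eq_of_ne i j _ h]

theorem trace_single_smul_one_hadamard_single :
    (trace (single i j (1 : R)) • (1 : Matrix ι ι R)) ⊙ single i j 1 =
      diagonal (single i j (1 : R)).diag := by
  by_cases h : i = j
  · subst h
    rw [trace_single_eq_same, one_smul, one_hadamard]
  · rw [diag_single_of_ne i j 1 h, trace_single_eq_of_ne i j _ h, zero_smul, zero_hadamard]
    exact diagonal_zero.symm

theorem trace_single_smul_one_sub_single_hadamard_self :
    (trace (single i j (1 : R)) • (1 : Matrix ι ι R) - single i j 1) ⊙
        (trace (single i j (1 : R)) • 1 - single i j 1) =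
      trace (single i j (1 : R)) • 1 - 2 • diagonal (single i j (1 : R)).diag +
        single i j 1 := by
  have hE : single i j (1 : R) ⊙ single i j 1 = single i j 1 := by
    rw [single_hadamard_single_eq, mul_one]
  rw [sub_hadamard_sub_eq_of_hadamard_self (trace_single_smul_one_hadamard_self i j) hE,
    trace_single_smul_one_hadamard_single]

end single

def choi [Semiring R] (φ : Matrix ι ι R → Matrix ι ι R) : Matrix (ι × ι) (ι × ι) R :=
  ∑ i, ∑ j, φ (single i j 1) ⊗ₖ single i j 1

theorem choi_apply [Semiring R] (φ : Matrix ι ι R → Matrix ι ι R) (a b c d : ι) :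
    choi φ (a, b) (c, d) = φ (single b d 1) a c := by
  simp [choi, sum_apply, kroneckerMap_apply, single_apply, ite_and]

theorem choi_hadamard_choi [Semiring R] (φ ψ : Matrix ι ι R → Matrix ι ι R) :
    choi φ ⊙ choi ψ = choi fun X => φ X ⊙ ψ X := by
  ext ⟨a, b⟩ ⟨c, d⟩
  simp only [hadamard_apply, choi_apply]

theorem choi_congr [Semiring R] {φ ψ : Matrix ι ι R → Matrix ι ι R}
    (h : ∀ i j, φ (single i j 1) = ψ (single i j 1)) : choi φ = choi ψ := by
  simp only [choi, h]

end Matrix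

theorem chi_is_hadamard_square (n : ℕ) :
    let phi₁ : Matrix (Fin n) (Fin n) ℂ → Matrix (Fin n) (Fin n) ℂ :=
      fun X => X.trace • (1 : Matrix (Fin n) (Fin n) ℂ)
        - 2 • Matrix.diagonal (fun i => X i i) + X
    let phi₂ : Matrix (Fin n) (Fin n) ℂ → Matrix (Fin n) (Fin n) ℂ :=
      fun X => X.trace • (1 : Matrix (Fin n) (Fin n) ℂ) - X
    let Choi : (Matrix (Fin n) (Fin n) ℂ → Matrix (Fin n) (Fin n) ℂ) →
        Matrix (Fin n × Fin n) (Fin n × Fin n) ℂ :=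
      fun phi => ∑ i : Fin n, ∑ j : Fin n,
        (phi (Matrix.single i j 1)) ⊗ₖ (Matrix.single i j 1)
    Choi phi₁ = Choi phi₂ ⊙ Choi phi₂ := by
  intro phi₁ phi₂ Choi
  show choi phi₁ = choi phi₂ ⊙ choi phi₂
  rw [choi_hadamard_choi]
  exact choi_congr fun i j => (trace_single_smul_one_sub_single_hadamard_self i j).symm
end

section
/- Let |Ψ⟩ = Σ_{i=1}^n √λ_i |ii⟩ be a Schmidt-decomposed unit vector on ℂ^n ⊗ ℂ^n with reduced state ρ_Ψ = diag(λ). Then the operator 2·1 - 2 (1 ⊗ ρ_Ψ) - (ρ_Ψ ⊗ 1) + |Ψ⟩⟨Ψ| equals Σ_{i≠j} √(λ_i λ_j) |ii⟩⟨jj| + Σ_{i,j} (2 - 2λ_j - λ_i + λ_i δ_{ij}) |ij⟩⟨ij|, and is positive semidefinite. -/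
/-!
Writing `v = ∑ᵢ √λᵢ |ii⟩`, the operator is `D + v vᵀ` with `D` diagonal, `D_{ij,ij} = 2 - 2λⱼ - λᵢ`.
For `i ≠ j` this coefficient is nonnegative because `λᵢ + λⱼ ≤ 1`, so dropping those terms
bounds the quadratic form below by `∑ᵢ (2 - 3λᵢ) yᵢ² + (∑ᵢ √λᵢ yᵢ)²`, where `yᵢ` is the
`|ii⟩`-component. Summing `(√λₖ yᵢ + √λᵢ yₖ)² ≥ 0` over all `i, k` and comparing
with the terms `i = k` gives `2 ∑ᵢ λᵢ yᵢ² ≤ ∑ᵢ yᵢ² + (∑ᵢ √λᵢ yᵢ)²`, which leaves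
`∑ᵢ (1 - λᵢ) yᵢ² ≥ 0`.
-/

open Matrix Kronecker

section Kronecker

variable {α l m : Type*} [MulZeroOneClass α] [DecidableEq l] [DecidableEq m]

theorem Matrix.one_kronecker_diagonal (b : m → α) :
    (1 : Matrix l l α) ⊗ₖ diagonal b = diagonal fun p => b p.2 := by
  rw [← diagonal_one, diagonal_kronecker_diagonal]
  simp only [one_mul]

theorem Matrix.diagonal_kronecker_one (a : l → α) :
    diagonal a ⊗ₖ (1 : Matrix m m α) = diagonal fun p => a p.1 := by
  rw [← diagonal_one, diagonal_kronecker_diagonal]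
  simp only [mul_one]

end Kronecker

section QuadraticForm

variable {ι : Type*} [Fintype ι]

theorem Matrix.dotProduct_diagonal_add_vecMulVec_mulVec {R : Type*} [CommSemiring R]
    [DecidableEq ι] (d v x : ι → R) :
    x ⬝ᵥ ((diagonal d + vecMulVec v v) *ᵥ x) = ∑ i, d i * x i ^ 2 + (v ⬝ᵥ x) ^ 2 := by
  rw [add_mulVec, dotProduct_add, vecMulVec_mulVec, op_smul_eq_smul, dotProduct_smul,
    smul_eq_mul, dotProduct_comm x v, sq]
  congr 1
  simp only [dotProduct, mulVec_diagonal]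
  exact Finset.sum_congr rfl fun i _ => by ring

theorem Matrix.posSemidef_diagonal_add_vecMulVec [DecidableEq ι] {d v : ι → ℝ}
    (h : ∀ x, 0 ≤ ∑ i, d i * x i ^ 2 + (v ⬝ᵥ x) ^ 2) :
    (diagonal d + vecMulVec v v).PosSemidef := by
  refine .of_dotProduct_mulVec_nonneg ?_ fun x => ?_
  · exact (isHermitian_diagonal d).add (by simp [IsHermitian])
  · simpa only [star_trivial, dotProduct_diagonal_add_vecMulVec_mulVec] using h x

theorem two_mul_sum_sq_mul_sq_le {R : Type*} [CommRing R] [LinearOrder R]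
    [IsStrictOrderedRing R] {s : ι → R} (hs : ∑ i, s i ^ 2 = 1) (y : ι → R) :
    2 * ∑ i, s i ^ 2 * y i ^ 2 ≤ ∑ i, y i ^ 2 + (∑ i, s i * y i) ^ 2 := by
  have expand : ∀ i k, (s k * y i + s i * y k) ^ 2
      = s k ^ 2 * y i ^ 2 + s i ^ 2 * y k ^ 2 + 2 * ((s i * y i) * (s k * y k)) :=
    fun _ _ => by ring
  have sum_sq : ∑ i, ∑ k, (s k * y i + s i * y k) ^ 2
      = 2 * ∑ i, y i ^ 2 + 2 * (∑ i, s i * y i) ^ 2 := by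
    simp_rw [expand, Finset.sum_add_distrib, ← Finset.sum_mul, ← Finset.mul_sum,
      ← Finset.sum_mul, hs]
    ring
  have diag_le : ∑ i, (s i * y i + s i * y i) ^ 2 ≤ ∑ i, ∑ k, (s k * y i + s i * y k) ^ 2 :=
    Finset.sum_le_sum fun i _ => Finset.single_le_sum (f := fun k => (s k * y i + s i * y k) ^ 2)
      (fun _ _ => sq_nonneg _) (Finset.mem_univ i)
  have diag_eq : ∑ i, (s i * y i + s i * y i) ^ 2 = 4 * ∑ i, s i ^ 2 * y i ^ 2 := by
    rw [Finset.mul_sum]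
    exact Finset.sum_congr rfl fun i _ => by ring
  linarith

theorem Fintype.sum_diag_le_sum_prod {M : Type*} [AddCommMonoid M] [PartialOrder M]
    [IsOrderedAddMonoid M] [DecidableEq ι] {f : ι × ι → M}
    (hf : ∀ p : ι × ι, p.1 ≠ p.2 → 0 ≤ f p) : ∑ i, f (i, i) ≤ ∑ p, f p := by
  rw [Fintype.sum_prod_type]
  refine Finset.sum_le_sum fun i _ => ?_
  rw [← Finset.add_sum_erase _ _ (Finset.mem_univ i)]
  exact le_add_of_nonneg_right <|
    Finset.sum_nonneg fun j hj => hf (i, j) (Finset.ne_of_mem_erase hj).symm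

end QuadraticForm

section SchmidtVector

variable {ι : Type*} {lam : ι → ℝ}

theorem le_one_of_sum_eq_one [Fintype ι] (hpos : ∀ i, 0 ≤ lam i) (hsum : ∑ i, lam i = 1)
    (i : ι) : lam i ≤ 1 :=
  hsum ▸ Finset.single_le_sum (fun k _ => hpos k) (Finset.mem_univ i)

theorem add_le_one_of_sum_eq_one [Fintype ι] [DecidableEq ι] (hpos : ∀ i, 0 ≤ lam i)
    (hsum : ∑ i, lam i = 1) {i j : ι} (hij : i ≠ j) : lam i + lam j ≤ 1 := by
  rw [← Finset.sum_pair hij, ← hsum]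
  exact Finset.sum_le_sum_of_subset_of_nonneg (Finset.subset_univ _) fun k _ _ => hpos k

noncomputable def schmidtVector [DecidableEq ι] (lam : ι → ℝ) : ι × ι → ℝ :=
  fun p => if p.1 = p.2 then √(lam p.1) else 0

theorem vecMulVec_schmidtVector [DecidableEq ι] (hpos : ∀ i, 0 ≤ lam i) :
    vecMulVec (schmidtVector lam) (schmidtVector lam) =
      of fun p q => if p.1 = p.2 ∧ q.1 = q.2 then √(lam p.1 * lam q.1) else 0 := by
  ext p q
  simp only [vecMulVec_apply, schmidtVector, of_apply, Real.sqrt_mul (hpos p.1)]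
  split_ifs <;> simp_all

theorem schmidtVector_dotProduct [Fintype ι] [DecidableEq ι] (x : ι × ι → ℝ) :
    schmidtVector lam ⬝ᵥ x = ∑ i, √(lam i) * x (i, i) := by
  simp only [dotProduct, schmidtVector, Fintype.sum_prod_type, ite_mul, zero_mul,
    Finset.sum_ite_eq, Finset.mem_univ, if_true]

theorem diagonal_add_vecMulVec_schmidtVector [DecidableEq ι] (hpos : ∀ i, 0 ≤ lam i) :
    diagonal (fun p : ι × ι => 2 - 2 * lam p.2 - lam p.1)
        + vecMulVec (schmidtVector lam) (schmidtVector lam) =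
      of fun p q =>
        (if p.1 = p.2 ∧ q.1 = q.2 ∧ p.1 ≠ q.1 then √(lam p.1 * lam q.1) else 0)
        + (if p = q then 2 - 2 * lam p.2 - lam p.1 + (if p.1 = p.2 then lam p.1 else 0)
            else 0) := by
  rw [vecMulVec_schmidtVector hpos]
  ext p q
  rcases eq_or_ne p q with rfl | hpq
  · by_cases hp : p.1 = p.2 <;> simp [hp, Real.sqrt_mul_self (hpos p.2), add_comm]
  · simp only [Matrix.add_apply, diagonal_apply_ne _ hpq, of_apply, if_neg hpq]
    grind

theorem notable_operator_quadForm_nonneg [Fintype ι] [DecidableEq ι] (hpos : ∀ i, 0 ≤ lam i)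
    (hsum : ∑ i, lam i = 1) (x : ι × ι → ℝ) :
    0 ≤ ∑ p : ι × ι, (2 - 2 * lam p.2 - lam p.1) * x p ^ 2 + (schmidtVector lam ⬝ᵥ x) ^ 2 := by
  set y : ι → ℝ := fun i => x (i, i)
  have off_diag_nonneg : ∀ p : ι × ι, p.1 ≠ p.2 → 0 ≤ (2 - 2 * lam p.2 - lam p.1) * x p ^ 2 :=
    fun p hp => by
      refine mul_nonneg ?_ (sq_nonneg _)
      linarith [add_le_one_of_sum_eq_one hpos hsum hp, le_one_of_sum_eq_one hpos hsum p.2]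
  have drop_off_diag : ∑ i, (2 - 3 * lam i) * y i ^ 2
      ≤ ∑ p : ι × ι, (2 - 2 * lam p.2 - lam p.1) * x p ^ 2 :=
    calc ∑ i, (2 - 3 * lam i) * y i ^ 2
        = ∑ i, (2 - 2 * lam (i, i).2 - lam (i, i).1) * x (i, i) ^ 2 :=
          Finset.sum_congr rfl fun i _ => by ring
      _ ≤ _ := Fintype.sum_diag_le_sum_prod off_diag_nonneg
  have sqrt_bound : 2 * ∑ i, lam i * y i ^ 2 ≤ ∑ i, y i ^ 2 + (∑ i, √(lam i) * y i) ^ 2 := by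
    simpa only [Real.sq_sqrt (hpos _)] using
      two_mul_sum_sq_mul_sq_le (s := fun i => √(lam i)) (by simpa [Real.sq_sqrt (hpos _)]) y
  have rest : 0 ≤ ∑ i, (1 - lam i) * y i ^ 2 :=
    Finset.sum_nonneg fun i _ =>
      mul_nonneg (by linarith [le_one_of_sum_eq_one hpos hsum i]) (sq_nonneg _)
  have split : ∑ i, (2 - 3 * lam i) * y i ^ 2
      = ∑ i, (1 - lam i) * y i ^ 2 + (∑ i, y i ^ 2 - 2 * ∑ i, lam i * y i ^ 2) := by
    simp only [Finset.mul_sum, ← Finset.sum_sub_distrib, ← Finset.sum_add_distrib]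
    exact Finset.sum_congr rfl fun i _ => by ring
  rw [schmidtVector_dotProduct]
  linarith

end SchmidtVector

theorem notable_operator_eq_and_posSemidef (n : ℕ) (lam : Fin n → ℝ)
    (hpos : ∀ i, 0 ≤ lam i) (hsum : ∑ i, lam i = 1) :
    let Psi : Matrix (Fin n × Fin n) (Fin n × Fin n) ℝ :=
      Matrix.of (fun p q => if p.1 = p.2 ∧ q.1 = q.2
        then Real.sqrt (lam p.1 * lam q.1) else 0)
    let rho : Matrix (Fin n) (Fin n) ℝ := Matrix.diagonal lam
    let X : Matrix (Fin n × Fin n) (Fin n × Fin n) ℝ :=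
      (2 : ℝ) • 1 - 2 • ((1 : Matrix (Fin n) (Fin n) ℝ) ⊗ₖ rho)
        - rho ⊗ₖ (1 : Matrix (Fin n) (Fin n) ℝ) + Psi
    X = Matrix.of (fun p q =>
        (if p.1 = p.2 ∧ q.1 = q.2 ∧ p.1 ≠ q.1 then Real.sqrt (lam p.1 * lam q.1) else 0)
        + (if p = q then 2 - 2 * lam p.2 - lam p.1
            + (if p.1 = p.2 then lam p.1 else 0) else 0))
    ∧ X.PosSemidef := by
  intro Psi rho X
  have hX : X = diagonal (fun p => 2 - 2 * lam p.2 - lam p.1)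
      + vecMulVec (schmidtVector lam) (schmidtVector lam) := by
    rw [vecMulVec_schmidtVector hpos]
    simp only [X, rho, one_kronecker_diagonal, diagonal_kronecker_one]
    rw [← diagonal_one, ← diagonal_smul, ← diagonal_smul, diagonal_sub, diagonal_sub]
    congr 2
    ext p
    simp only [Pi.smul_apply, smul_eq_mul, nsmul_eq_mul]
    ring
  exact ⟨hX.trans (diagonal_add_vecMulVec_schmidtVector hpos),
    hX ▸ posSemidef_diagonal_add_vecMulVec (notable_operator_quadForm_nonneg hpos hsum)⟩
end

section
/- The operator F + n |ε⟩⟨ε| = Σ_{i≠j} |ii⟩⟨jj| + Σ_{i,j} |ij⟩⟨ij| on ℂ^n ⊗ ℂ^n is separable, i.e., it is a nonnegative combination of tensor products of positive semidefinite matrices. -/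
open Matrix Kronecker ComplexOrder

lemma I_zpow_sum {α : Type*} (s : Finset α) (f : α → ℤ) :
    Complex.I ^ (∑ m ∈ s, f m) = ∏ m ∈ s, Complex.I ^ f m := by
  induction s using Finset.cons_induction with
  | empty => simp
  | cons a s ha ih => rw [Finset.sum_cons, Finset.prod_cons, zpow_add₀ Complex.I_ne_zero, ih]

lemma sumFour (c : ℤ) (h : c = -2 ∨ c = -1 ∨ c = 0 ∨ c = 1 ∨ c = 2) :
    ∑ t : Fin 4, Complex.I ^ (c * (t : ℤ)) = if c = 0 then 4 else 0 := by
  have key : ∀ t : Fin 4, Complex.I ^ (c * (t : ℤ)) = (Complex.I ^ c) ^ (t : ℕ) := by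
    intro t
    rw [_root_.zpow_mul, zpow_natCast]
  simp only [key, Fin.sum_univ_four, Fin.val_zero, Fin.val_one]
  have h2 : ((2 : Fin 4) : ℕ) = 2 := rfl
  have h3 : ((3 : Fin 4) : ℕ) = 3 := rfl
  have hI2 : Complex.I ^ (2:ℤ) = -1 := by
    rw [show (2:ℤ) = ((2:ℕ):ℤ) from rfl, zpow_natCast]; exact Complex.I_sq
  rcases h with rfl | rfl | rfl | rfl | rfl
  · norm_num [h2, h3, hI2]
  · norm_num [h2, h3, Complex.inv_I, pow_succ, Complex.I_sq]
  · norm_num [h2, h3]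
  · norm_num [h2, h3, pow_succ, Complex.I_sq]
  · norm_num [h2, h3, hI2]

lemma charSum (n : ℕ) (i j k l : Fin n) :
    ∑ θ : Fin n → Fin 4,
      Complex.I ^ ((θ i : ℤ) - (θ k : ℤ)) * Complex.I ^ ((θ l : ℤ) - (θ j : ℤ))
    = (4:ℂ)^n * ((if i = j ∧ k = l ∧ i ≠ k then 1 else 0)
        + (if (i,j) = (k,l) then 1 else 0)) := by
  classical
  set c : Fin n → ℤ := fun m =>
    (if m = i then 1 else 0) - (if m = k then 1 else 0)
      + (if m = l then 1 else 0) - (if m = j then 1 else 0) with hc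
  have step1 : ∀ θ : Fin n → Fin 4,
      Complex.I ^ ((θ i : ℤ) - (θ k : ℤ)) * Complex.I ^ ((θ l : ℤ) - (θ j : ℤ))
      = ∏ m, Complex.I ^ (c m * (θ m : ℤ)) := by
    intro θ
    rw [← zpow_add₀ Complex.I_ne_zero, ← I_zpow_sum]
    congr 1
    simp only [hc, sub_mul, add_mul, ite_mul, one_mul, zero_mul,
      Finset.sum_sub_distrib, Finset.sum_add_distrib, Finset.sum_ite_eq',
      Finset.mem_univ, if_pos]
    ring
  rw [Finset.sum_congr rfl (fun θ _ => step1 θ),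
    ← Fintype.prod_sum (fun m (t : Fin 4) => Complex.I ^ (c m * (t : ℤ)))]
  have hrange : ∀ m, c m = -2 ∨ c m = -1 ∨ c m = 0 ∨ c m = 1 ∨ c m = 2 := by
    intro m
    simp only [hc]
    split_ifs <;> norm_num
  have step3 : ∀ m, (∑ t : Fin 4, Complex.I ^ (c m * (t : ℤ)))
      = if c m = 0 then 4 else 0 := fun m => sumFour (c m) (hrange m)
  rw [Finset.prod_congr rfl (fun m _ => step3 m)]
  by_cases hall : ∀ m, c m = 0
  · simp only [hall, if_pos, Finset.prod_const, Finset.card_univ, Fintype.card_fin]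
    -- now show RHS matches: need exactly one of the two conditions
    have hcase : (i = j ∧ k = l) ∨ (i = k ∧ j = l) := by
      by_cases hik : i = k
      · right
        refine ⟨hik, ?_⟩
        have := hall l
        simp only [hc, hik] at this
        by_cases hlj : l = j
        · exact hlj.symm
        · exfalso
          by_cases hli : l = i <;> by_cases hlk : l = k <;>
            simp_all <;> omega
      · left
        have hi := hall i
        simp only [hc, if_pos rfl] at hi
        have hij : i = j := by
          by_cases h1 : i = k <;> by_cases h2 : i = l <;> by_cases h3 : i = j <;>
            simp_all <;> omega
        refine ⟨hij, ?_⟩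
        have hk := hall k
        simp only [hc] at hk
        by_cases h1 : k = i <;> by_cases h2 : k = l <;> by_cases h3 : k = j <;>
          simp_all <;> omega
    rcases hcase with ⟨hij, hkl⟩ | ⟨hik, hjl⟩
    · subst hij; subst hkl
      by_cases hik : i = k
      · subst hik; simp
      · simp [hik, Prod.ext_iff]
    · subst hik; subst hjl
      simp
  · push_neg at hall
    obtain ⟨m, hm⟩ := hall
    rw [Finset.prod_eq_zero (Finset.mem_univ m) (by simp [hm])]
    -- show RHS = 0: neither condition can hold
    have h1 : ¬(i = j ∧ k = l ∧ i ≠ k) := by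
      rintro ⟨rfl, rfl, hik⟩
      apply hm
      simp only [hc]
      split_ifs <;> omega
    have h2 : ¬((i,j) = (k,l)) := by
      rintro h
      rw [Prod.mk.injEq] at h
      obtain ⟨rfl, rfl⟩ := h
      apply hm
      simp only [hc]
      split_ifs <;> omega
    simp [h1, h2]

lemma outer_psd {n : ℕ} (v : Fin n → ℂ) :
    (Matrix.of (fun a b => v a * star (v b))).PosSemidef := by
  have heq : Matrix.of (fun a b => v a * star (v b))
      = Matrix.replicateCol Unit v * (Matrix.replicateCol Unit v)ᴴ := by
    ext a b
    simp [Matrix.mul_apply]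
  rw [heq]
  exact Matrix.posSemidef_self_mul_conjTranspose _

lemma I_zpow_sub (x y : ℤ) :
    Complex.I ^ (x - y) = Complex.I ^ x * star (Complex.I ^ y) := by
  rw [star_zpow₀, Complex.star_def, Complex.conj_I, ← Complex.inv_I, _root_.inv_zpow,
    zpow_sub₀ Complex.I_ne_zero, div_eq_mul_inv]

def MatSeparable {dA dB : ℕ} (M : Matrix (Fin dA × Fin dB) (Fin dA × Fin dB) ℂ) : Prop :=
  ∃ (k : ℕ) (p : Fin k → ℝ) (A : Fin k → Matrix (Fin dA) (Fin dA) ℂ)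
    (B : Fin k → Matrix (Fin dB) (Fin dB) ℂ),
    (∀ m, 0 ≤ p m) ∧ (∀ m, (A m).PosSemidef) ∧ (∀ m, (B m).PosSemidef) ∧
    M = ∑ m, (p m : ℂ) • (A m ⊗ₖ B m)

theorem F_plus_maxEnt_separable (n : ℕ) :
    MatSeparable (Matrix.of (fun p q : Fin n × Fin n =>
      ((if p.1 = p.2 ∧ q.1 = q.2 ∧ p.1 ≠ q.1 then 1 else 0)
        + (if p = q then 1 else 0) : ℂ))) := by
  classical
  set A : (Fin n → Fin 4) → Matrix (Fin n) (Fin n) ℂ := fun θ =>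
    Matrix.of fun a b => Complex.I ^ ((θ a : ℤ) - (θ b : ℤ)) with hAdef
  have hA : ∀ θ, (A θ).PosSemidef := by
    intro θ
    have : A θ = Matrix.of (fun a b =>
        (fun m => Complex.I ^ ((θ m : ℤ))) a * star ((fun m => Complex.I ^ ((θ m : ℤ))) b)) := by
      ext a b
      simp only [hAdef, Matrix.of_apply]
      exact I_zpow_sub _ _
    rw [this]
    exact outer_psd _
  set e := Fintype.equivFin (Fin n → Fin 4) with he
  refine ⟨Fintype.card (Fin n → Fin 4), fun _ => (1/4 : ℝ)^n,
    fun m => A (e.symm m), fun m => (A (e.symm m))ᵀ,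
    fun m => by positivity, fun m => hA _, fun m => (hA _).transpose, ?_⟩
  beta_reduce
  rw [Fintype.sum_equiv e.symm
    (fun m => ((((1/4:ℝ))^n : ℝ) : ℂ) • (A (e.symm m) ⊗ₖ (A (e.symm m))ᵀ))
    (fun θ => ((((1/4:ℝ))^n : ℝ) : ℂ) • (A θ ⊗ₖ (A θ)ᵀ)) (fun m => rfl)]
  ext ⟨i, j⟩ ⟨k', l⟩
  simp only [Matrix.sum_apply, Matrix.smul_apply, Matrix.kroneckerMap_apply,
    Matrix.transpose_apply, hAdef, Matrix.of_apply, smul_eq_mul]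
  rw [← Finset.mul_sum, charSum n i j k' l, ← mul_assoc]
  have hone : ((((1/4:ℝ))^n : ℝ) : ℂ) * (4:ℂ)^n = 1 := by
    push_cast
    rw [← mul_pow]
    norm_num
  rw [hone, one_mul]
end
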